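/- Coercivity estimate for the penalized functional: let 1 < p, ϑ > γ + p ≥ p, κ > ϑ/(ϑ - p), ν > 0, ε > 0. Suppose j(x,s,ξ) ≥ ν|ξ|^p, j_ξ(x,s,ξ)·ξ = p j(x,s,ξ), j_s(x,s,ξ)s ≤ γ j(x,s,ξ), V(x) ≥ α > 0, and g satisfies ϑG(x,s) ≤ g(x,s)s for x ∈ Λ and 0 ≤ pG(x,s) ≤ g(x,s)s ≤ (1/κ)V(x)s^p for x ∉ Λ. Then for every u ∈ W_V(Ω), min{(ϑ-γ-p)νε^p, ϑ/p - ϑ/(pκ) - 1} · ∫_Ω (|Du|^p + V(x)|u|^p) ≤ ϑ J_ε(u) - J'_ε(u)[u], where J_ε(u) = ε^p∫ j(x,u,Du) + (1/p)∫ V|u|^p - ∫ G(x,u) and J'_ε(u)[u] = ε^p∫ j_ξ(x,u,Du)·Du + ε^p∫ j_s(x,u,Du)u + ∫ V|u|^p - ∫ g(x,u)u. -/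
import Mathlib


open MeasureTheory
open scoped RealInnerProductSpace

/-- Coercivity estimate for the penalized functional. -/
theorem coercivity_estimate {N : ℕ} (hN : 1 ≤ N)
    (p ϑ γ κ ν α ε : ℝ)
    (hp : 1 < p) (hγ : 0 ≤ γ) (hϑ : γ + p < ϑ) (hκ : ϑ / (ϑ - p) < κ)
    (hν : 0 < ν) (hα : 0 < α) (hε : 0 < ε)
    (Ω Λ : Set (EuclideanSpace ℝ (Fin N))) (hΩ : IsOpen Ω)
    (hΛ : MeasurableSet Λ) (hΛΩ : Λ ⊆ Ω)
    (j : EuclideanSpace ℝ (Fin N) → ℝ → EuclideanSpace ℝ (Fin N) → ℝ)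
    (jξ : EuclideanSpace ℝ (Fin N) → ℝ → EuclideanSpace ℝ (Fin N) →
      EuclideanSpace ℝ (Fin N))
    (js : EuclideanSpace ℝ (Fin N) → ℝ → EuclideanSpace ℝ (Fin N) → ℝ)
    (V : EuclideanSpace ℝ (Fin N) → ℝ) (hV : ∀ x, α ≤ V x)
    (g G : EuclideanSpace ℝ (Fin N) → ℝ → ℝ)
    (hj : ∀ x s ξ, ν * ‖ξ‖ ^ p ≤ j x s ξ)
    (heuler : ∀ x s ξ, ⟪jξ x s ξ, ξ⟫ = p * j x s ξ)
    (hjs : ∀ x s ξ, js x s ξ * s ≤ γ * j x s ξ)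
    (hgΛ : ∀ x ∈ Λ, ∀ s : ℝ, ϑ * G x s ≤ g x s * s)
    (hgout : ∀ x ∈ Ω \ Λ, ∀ s : ℝ,
      0 ≤ p * G x s ∧ p * G x s ≤ g x s * s ∧ g x s * s ≤ 1 / κ * V x * |s| ^ p)
    (u : EuclideanSpace ℝ (Fin N) → ℝ) (hu : Differentiable ℝ u)
    (hIj : IntegrableOn (fun x => j x (u x) (gradient u x)) Ω volume)
    (hIV : IntegrableOn (fun x => V x * |u x| ^ p) Ω volume)
    (hIG : IntegrableOn (fun x => G x (u x)) Ω volume)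
    (hIjs : IntegrableOn (fun x => js x (u x) (gradient u x) * u x) Ω volume)
    (hIg : IntegrableOn (fun x => g x (u x) * u x) Ω volume)
    (hIDu : IntegrableOn (fun x => ‖gradient u x‖ ^ p) Ω volume) :
    min ((ϑ - γ - p) * ν * ε ^ p) (ϑ / p - ϑ / (p * κ) - 1) *
        ∫ x in Ω, (‖gradient u x‖ ^ p + V x * |u x| ^ p)
      ≤ ϑ * (ε ^ p * (∫ x in Ω, j x (u x) (gradient u x))
              + (1 / p) * (∫ x in Ω, V x * |u x| ^ p)
              - ∫ x in Ω, G x (u x))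
        - (ε ^ p * (∫ x in Ω, ⟪jξ x (u x) (gradient u x), gradient u x⟫)
              + ε ^ p * (∫ x in Ω, js x (u x) (gradient u x) * u x)
              + (∫ x in Ω, V x * |u x| ^ p)
              - ∫ x in Ω, g x (u x) * u x) := by
  have hΩm : MeasurableSet Ω := hΩ.measurableSet
  have hp0 : 0 < p := lt_trans one_pos hp
  have hϑp : p < ϑ := by linarith
  have hϑ0 : 0 < ϑ := by linarith
  have hκ0 : 0 < κ := lt_trans (div_pos hϑ0 (by linarith)) hκ
  have hεp : 0 < ε ^ p := Real.rpow_pos_of_pos hε p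
  -- rewrite the Euler integral
  have hE : (∫ x in Ω, ⟪jξ x (u x) (gradient u x), gradient u x⟫)
      = p * ∫ x in Ω, j x (u x) (gradient u x) := by
    simp only [heuler]
    exact integral_const_mul p _
  rw [hE]
  rw [integral_add hIDu hIV]
  set Ij := ∫ x in Ω, j x (u x) (gradient u x) with hIjdef
  set IV := ∫ x in Ω, V x * |u x| ^ p with hIVdef
  set IG := ∫ x in Ω, G x (u x) with hIGdef
  set Ijs := ∫ x in Ω, js x (u x) (gradient u x) * u x with hIjsdef
  set Igu := ∫ x in Ω, g x (u x) * u x with hIgudef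
  set IDu := ∫ x in Ω, ‖gradient u x‖ ^ p with hIDudef
  have hIDu0 : 0 ≤ IDu :=
    setIntegral_nonneg hΩm fun x _ => Real.rpow_nonneg (norm_nonneg _) p
  have hVnn : ∀ x, 0 ≤ V x * |u x| ^ p := fun x =>
    mul_nonneg (le_trans hα.le (hV x)) (Real.rpow_nonneg (abs_nonneg _) p)
  have hIV0 : 0 ≤ IV := setIntegral_nonneg hΩm fun x _ => hVnn x
  -- (a) Ijs ≤ γ * Ij
  have h_js : Ijs ≤ γ * Ij := by
    have := setIntegral_mono_on hIjs (hIj.const_mul γ) hΩm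
      (fun x _ => hjs x (u x) (gradient u x))
    rwa [integral_const_mul _ _] at this
  -- (b) ν * IDu ≤ Ij
  have h_j : ν * IDu ≤ Ij := by
    have := setIntegral_mono_on (hIDu.const_mul ν) hIj hΩm
      (fun x _ => hj x (u x) (gradient u x))
    rwa [integral_const_mul _ _] at this
  -- (c) g-term estimate
  have hG : (1 - ϑ / p) / κ * IV ≤ Igu - ϑ * IG := by
    set f : EuclideanSpace ℝ (Fin N) → ℝ :=
      fun x => g x (u x) * u x - ϑ * G x (u x) with hfdef
    have hIf : IntegrableOn f Ω := hIg.sub (hIG.const_mul ϑ)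
    have hfint : Igu - ϑ * IG = ∫ x in Ω, f x := by
      rw [hfdef]
      rw [integral_sub hIg (hIG.const_mul ϑ), integral_const_mul _ _]
    have hsplit : (∫ x in Ω, f x) = (∫ x in Λ, f x) + ∫ x in Ω \ Λ, f x := by
      rw [← setIntegral_union Set.disjoint_sdiff_right (hΩm.diff hΛ)
        (hIf.mono_set hΛΩ) (hIf.mono_set Set.diff_subset),
        Set.union_diff_cancel hΛΩ]
    have h1 : 0 ≤ ∫ x in Λ, f x :=
      setIntegral_nonneg hΛ fun x hx => by
        have := hgΛ x hx (u x); simp only [hfdef]; linarith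
    have h2 : (∫ x in Ω \ Λ, (1 - ϑ / p) / κ * (V x * |u x| ^ p))
        ≤ ∫ x in Ω \ Λ, f x := by
      refine setIntegral_mono_on
        (IntegrableOn.mono_set (hIV.const_mul ((1 - ϑ / p) / κ)) Set.diff_subset)
        (hIf.mono_set Set.diff_subset) (hΩm.diff hΛ) fun x hx => ?_
      obtain ⟨ha, hb, hc⟩ := hgout x hx (u x)
      simp only [hfdef]
      have hgu0 : 0 ≤ g x (u x) * u x := le_trans ha hb
      have h3 : ϑ * G x (u x) ≤ ϑ / p * (g x (u x) * u x) := by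
        have := mul_le_mul_of_nonneg_left hb (le_of_lt (div_pos hϑ0 hp0))
        calc ϑ * G x (u x) = ϑ / p * (p * G x (u x)) := by
              field_simp
          _ ≤ ϑ / p * (g x (u x) * u x) := this
      have h4 : (1 - ϑ / p) * (1 / κ * V x * |u x| ^ p)
          ≤ (1 - ϑ / p) * (g x (u x) * u x) := by
        apply mul_le_mul_of_nonpos_left hc
        have : (1:ℝ) < ϑ / p := (one_lt_div hp0).mpr hϑp
        linarith
      have heq : (1 - ϑ / p) / κ * (V x * |u x| ^ p)
          = (1 - ϑ / p) * (1 / κ * V x * |u x| ^ p) := by ring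
      rw [heq]
      linarith [h3, h4]
    rw [integral_const_mul _ _] at h2
    have hsub : (∫ x in Ω \ Λ, V x * |u x| ^ p) ≤ IV :=
      setIntegral_mono_set hIV (Filter.Eventually.of_forall fun x => hVnn x)
        (Filter.Eventually.of_forall fun x hx => hx.1)
    have hcoef : (1 - ϑ / p) / κ ≤ 0 := by
      apply div_nonpos_of_nonpos_of_nonneg _ hκ0.le
      have : (1:ℝ) < ϑ / p := (one_lt_div hp0).mpr hϑp
      linarith
    have := mul_le_mul_of_nonpos_left hsub hcoef
    linarith [hfint, hsplit, h1, h2, this]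
  clear_value Ij IV IG Ijs Igu IDu
  -- combine
  set c1 := (ϑ - γ - p) * ν * ε ^ p with hc1def
  set c2 := ϑ / p - ϑ / (p * κ) - 1 with hc2def
  have key1 : c1 * IDu ≤ ε ^ p * ((ϑ - p) * Ij - Ijs) := by
    rw [hc1def]
    have hc1 : 0 < ϑ - γ - p := by linarith
    have hB : (ϑ - γ - p) * (ν * IDu) ≤ (ϑ - γ - p) * Ij :=
      mul_le_mul_of_nonneg_left h_j hc1.le
    have hB' : ε ^ p * ((ϑ - γ - p) * (ν * IDu)) ≤ ε ^ p * ((ϑ - γ - p) * Ij) :=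
      mul_le_mul_of_nonneg_left hB hεp.le
    have hA : ε ^ p * Ijs ≤ ε ^ p * (γ * Ij) :=
      mul_le_mul_of_nonneg_left h_js hεp.le
    linarith [hB', hA]
  have key2 : c2 * IV ≤ (ϑ / p - 1) * IV + (Igu - ϑ * IG) := by
    rw [hc2def]
    have hκIV : 0 ≤ 1 / κ * IV := mul_nonneg (by positivity) hIV0
    have hexp : (1 - ϑ / p) / κ = 1/κ - ϑ / (p * κ) := by
      field_simp
    rw [hexp] at hG
    linarith [hG, hκIV]
  have key3 : min c1 c2 * (IDu + IV) ≤ c1 * IDu + c2 * IV := by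
    linarith [mul_le_mul_of_nonneg_right (min_le_left c1 c2) hIDu0,
      mul_le_mul_of_nonneg_right (min_le_right c1 c2) hIV0]
  have hstep : min c1 c2 * (IDu + IV)
      ≤ ε ^ p * ((ϑ - p) * Ij - Ijs) + ((ϑ / p - 1) * IV + (Igu - ϑ * IG)) :=
    le_trans key3 (add_le_add key1 key2)
  have hring : ϑ * (ε ^ p * Ij + 1 / p * IV - IG)
      - (ε ^ p * (p * Ij) + ε ^ p * Ijs + IV - Igu)
      = ε ^ p * ((ϑ - p) * Ij - Ijs) + ((ϑ / p - 1) * IV + (Igu - ϑ * IG)) := by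
    ring
  rw [hring]
  exact hstep
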